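/- arXiv:1809.07619 — 2 statements merged into one kernel-verified Lean document; each statement's English description precedes it below -/
import Mathlib

section
/- Let p be a prime with p ≡ 3 (mod 4), let a ≥ 1 be odd, and let c be an integer coprime to p. The linking form β on ℤ/p^a ⊕ ℤ/p^a defined by β((x₁,x₂),(y₁,y₂)) = c(x₁y₁ + x₂y₂)/p^a (mod ℤ) is not metabolic: there is no subgroup M of order p^a on which β vanishes. -/
/-!
Only the diagonal of `β` matters: since `c` is a unit mod `p`, every `x ∈ M` satisfies
`pᵃ ∣ x₁² + x₂²`. As `-1` is not a square mod `p`, `p ∣ u² + v²` forces `p ∣ u` and `p ∣ v`;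
dividing out `p²` repeatedly, `p^(2b+1) ∣ u² + v²` forces `p^(b+1) ∣ u, v`. Hence for `a = 2b + 1`
the subgroup `M` lies in `p^(b+1) (ℤ/pᵃ)²`, which has only `p^(2b) < pᵃ` elements.
-/

theorem Int.prime_dvd_of_dvd_sq_add_sq {p : ℕ} [Fact p.Prime] (hp3 : p % 4 = 3) {u v : ℤ}
    (h : (p : ℤ) ∣ u ^ 2 + v ^ 2) : (p : ℤ) ∣ u ∧ (p : ℤ) ∣ v := by
  simp only [← ZMod.intCast_zmod_eq_zero_iff_dvd] at h ⊢
  push_cast at h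
  have hu : (u : ZMod p) = 0 := by
    by_contra hu
    exact ZMod.mod_four_ne_three_of_sq_eq_neg_sq hu (eq_neg_of_add_eq_zero_left h) hp3
  rw [hu, zero_pow two_ne_zero, zero_add, sq_eq_zero_iff] at h
  exact ⟨hu, h⟩

theorem Int.pow_succ_dvd_of_pow_dvd_sq_add_sq {p : ℕ} [Fact p.Prime] (hp3 : p % 4 = 3)
    (k : ℕ) {u v : ℤ} (h : (p : ℤ) ^ (2 * k + 1) ∣ u ^ 2 + v ^ 2) :
    (p : ℤ) ^ (k + 1) ∣ u ∧ (p : ℤ) ^ (k + 1) ∣ v := by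
  induction k generalizing u v with
  | zero => simpa using Int.prime_dvd_of_dvd_sq_add_sq hp3 (by simpa using h)
  | succ k ih =>
    obtain ⟨⟨u', rfl⟩, ⟨v', rfl⟩⟩ :=
      Int.prime_dvd_of_dvd_sq_add_sq hp3 ((dvd_pow_self _ (by omega)).trans h)
    have hp : (p : ℤ) ^ 2 ≠ 0 := pow_ne_zero _ (by exact_mod_cast (Fact.out : p.Prime).ne_zero)
    have h' : (p : ℤ) ^ 2 * (p : ℤ) ^ (2 * k + 1) ∣ (p : ℤ) ^ 2 * (u' ^ 2 + v' ^ 2) := by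
      convert h using 1 <;> ring
    obtain ⟨hu, hv⟩ := ih ((mul_dvd_mul_iff_left hp).1 h')
    rw [pow_succ']
    exact ⟨mul_dvd_mul_left _ hu, mul_dvd_mul_left _ hv⟩

theorem ZMod.card_le_of_forall_dvd_val {n m : ℕ} [NeZero n] (hm : m ∣ n)
    {S : Set (ZMod n × ZMod n)} (hS : ∀ x ∈ S, m ∣ x.1.val ∧ m ∣ x.2.val) :
    Nat.card S ≤ (n / m) ^ 2 := by
  let f : S → Fin (n / m) × Fin (n / m) := fun x =>
    (⟨x.1.1.val / m, Nat.div_lt_div_of_lt_of_dvd hm (ZMod.val_lt _)⟩,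
      ⟨x.1.2.val / m, Nat.div_lt_div_of_lt_of_dvd hm (ZMod.val_lt _)⟩)
  have hf : Function.Injective f := by
    rintro ⟨x, hx⟩ ⟨y, hy⟩ hxy
    simp only [f, Prod.mk.injEq, Fin.mk.injEq] at hxy
    obtain ⟨hx1, hx2⟩ := hS x hx
    obtain ⟨hy1, hy2⟩ := hS y hy
    refine Subtype.ext (Prod.ext (ZMod.val_injective _ ?_) (ZMod.val_injective _ ?_))
    · rw [← Nat.div_mul_cancel hx1, ← Nat.div_mul_cancel hy1, hxy.1]
    · rw [← Nat.div_mul_cancel hx2, ← Nat.div_mul_cancel hy2, hxy.2]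
  simpa [sq] using Nat.card_le_card_of_injective f hf

theorem diagonal_linking_form_three_mod_four_not_metabolic_general (p : ℕ) (hp : p.Prime)
    (h3 : p % 4 = 3) (a : ℕ) (haodd : Odd a) (c : ℤ) (hc : Int.gcd c p = 1) :
    ¬ ∃ M : AddSubgroup (ZMod (p ^ a) × ZMod (p ^ a)), Nat.card M = p ^ a ∧
      ∀ x ∈ M, ∀ y ∈ M,
        ((p : ℤ) ^ a) ∣ c * ((x.1.val : ℤ) * (y.1.val : ℤ) + (x.2.val : ℤ) * (y.2.val : ℤ)) := by
  rintro ⟨M, hcard, hβ⟩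
  obtain ⟨b, rfl⟩ := haodd
  have : Fact p.Prime := ⟨hp⟩
  have hcop : IsCoprime ((p : ℤ) ^ (2 * b + 1)) c :=
    ((Int.isCoprime_iff_gcd_eq_one.2 hc).pow_right).symm
  have hdvd : ∀ x ∈ M, p ^ (b + 1) ∣ x.1.val ∧ p ^ (b + 1) ∣ x.2.val := by
    intro x hx
    have hx := hcop.dvd_of_dvd_mul_left (hβ x hx x hx)
    rw [← sq, ← sq] at hx
    simpa only [← Nat.cast_pow, Int.natCast_dvd_natCast]
      using Int.pow_succ_dvd_of_pow_dvd_sq_add_sq h3 b hx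
  have hle := ZMod.card_le_of_forall_dvd_val (pow_dvd_pow p (by omega)) hdvd
  rw [SetLike.coe_sort_coe, hcard, Nat.pow_div (by omega) hp.pos, ← pow_mul] at hle
  exact absurd hle (not_le.2 (Nat.pow_lt_pow_right hp.one_lt (by omega)))

/-- For a prime `p ≡ 3 (mod 4)`, odd `a ≥ 1` and `c` coprime to `p`, the linking form
`β((x₁,x₂),(y₁,y₂)) = c(x₁y₁+x₂y₂)/pᵃ` on `ℤ/pᵃ ⊕ ℤ/pᵃ` is not metabolic: there is no
subgroup of order `pᵃ` on which `β` vanishes. -/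
theorem diagonal_linking_form_three_mod_four_not_metabolic (p : ℕ) (hp : p.Prime)
    (h3 : p % 4 = 3) (a : ℕ) (ha : 1 ≤ a) (haodd : Odd a) (c : ℤ) (hc : Int.gcd c p = 1) :
    ¬ ∃ M : AddSubgroup (ZMod (p ^ a) × ZMod (p ^ a)), Nat.card M = p ^ a ∧
      ∀ x ∈ M, ∀ y ∈ M,
        ((p : ℤ) ^ a) ∣ c * ((x.1.val : ℤ) * (y.1.val : ℤ) + (x.2.val : ℤ) * (y.2.val : ℤ)) :=
  diagonal_linking_form_three_mod_four_not_metabolic_general p hp h3 a haodd c hc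
end

section
/- Let p be a prime, a ≥ 1 odd, γ coprime to p, and let β be the linking form on G = ℤ/p^a ⊕ ℤ/p^a given by β((x₁,x₂),(y₁,y₂)) = γ(x₁y₁ + x₂y₂)/p^a (mod ℤ). If M ⊆ G is a metabolizer (a subgroup of order p^a on which β vanishes), then M contains an element of the form (p^(a-1), α p^(a-1)) with gcd(α, p) = 1 and 1 + α² ≡ 0 (mod p). -/
/-!
The elements of `ℤ/p^(2k+1)` killed by `p^k` number `p^k`, so a subgroup of order `p^(2k+1)`
of the square contains some `m = (s, t)` with `p^k • m ≠ 0`. Self-linking zero gives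
`p^(2k+1) ∣ s² + t²`, which forces `s = p^i u`, `t = p^i w` with `i ≤ k`, `p ∤ u` and
`p ∣ u² + w²`. If `y u ≡ 1 (mod p)`, then `(y p^(2k-i)) • m = (p^(2k), y w p^(2k))`, because
`p^(2k)` only sees residues mod `p`; so `α = y w` works.
-/

open Finset in
theorem AddSubgroup.card_le_sq_of_nsmul_eq_zero {G : Type*} [AddCommGroup G] [Fintype G]
    [IsAddCyclic G] {d : ℕ} (hd : 0 < d) (H : AddSubgroup (G × G))
    (hH : ∀ x ∈ H, d • x = 0) : Nat.card H ≤ d ^ 2 := by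
  classical
  let T : Finset G := {a | d • a = 0}
  have hsub : (H : Set (G × G)).toFinset ⊆ T ×ˢ T := by
    intro x hx
    simpa [T, Prod.ext_iff] using hH x (by simpa using hx)
  calc Nat.card H = #(H : Set (G × G)).toFinset := Nat.card_eq_card_toFinset _
    _ ≤ #(T ×ˢ T) := card_le_card hsub
    _ ≤ d ^ 2 := by
      rw [card_product, sq]
      exact Nat.mul_le_mul (IsAddCyclic.card_nsmul_eq_zero_le hd)
        (IsAddCyclic.card_nsmul_eq_zero_le hd)

theorem ZMod.nsmul_eq_zero_of_dvd_val {n d e : ℕ} [NeZero n] (hde : n ∣ d * e) {x : ZMod n}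
    (hx : d ∣ x.val) : e • x = 0 := by
  obtain ⟨q, hq⟩ := hx
  rw [← ZMod.natCast_zmod_val x, hq, nsmul_eq_mul, ← Nat.cast_mul, ZMod.natCast_eq_zero_iff]
  exact hde.trans ⟨q, by ring⟩

theorem Prime.not_dvd_of_dvd_sq_add_sq {R : Type*} [CommRing R] {p u w : R} (hp : Prime p)
    (hu : ¬ p ∣ u) (huw : p ∣ u ^ 2 + w ^ 2) : ¬ p ∣ w := fun hw =>
  hu <| hp.dvd_of_dvd_pow <| (dvd_add_left (dvd_pow hw two_ne_zero)).mp huw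

theorem IsCoprime.exists_dvd_mul_sub_one {R : Type*} [CommRing R] {p u : R}
    (h : IsCoprime p u) : ∃ y, p ∣ y * u - 1 ∧ IsCoprime y p := by
  obtain ⟨x, y, hxy⟩ := h
  exact ⟨y, ⟨-x, by linear_combination hxy⟩, ⟨u, x, by linear_combination hxy⟩⟩

theorem dvd_one_add_sq_of_dvd_mul_sub_one {R : Type*} [CommRing R] {p u w y : R}
    (hy : p ∣ y * u - 1) (huw : p ∣ u ^ 2 + w ^ 2) : p ∣ 1 + (y * w) ^ 2 := by
  have h : 1 + (y * w) ^ 2 = y ^ 2 * (u ^ 2 + w ^ 2) - (y * u - 1) * (y * u + 1) := by ring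
  rw [h]
  exact dvd_sub (dvd_mul_of_dvd_right huw _) (dvd_mul_of_dvd_left hy _)

namespace Int

theorem exists_eq_pow_mul_of_pow_dvd_sq_add_sq_of_not_dvd {p : ℤ} (hp : Prime p) {k : ℕ}
    {s t : ℤ} (hst : p ^ (2 * k + 1) ∣ s ^ 2 + t ^ 2) (hs : ¬ p ^ (k + 1) ∣ s) :
    ∃ i ≤ k, ∃ u w : ℤ, s = p ^ i * u ∧ t = p ^ i * w ∧ ¬ p ∣ u ∧ p ∣ u ^ 2 + w ^ 2 := by
  have hs0 : s ≠ 0 := by rintro rfl; exact hs (dvd_zero _)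
  obtain ⟨i, u, hu, rfl⟩ := WfDvdMonoid.max_power_factor hs0 hp.irreducible
  have hik : i ≤ k := by
    by_contra! h
    exact hs (Dvd.dvd.mul_right (pow_dvd_pow p h) u)
  have ht : p ^ i ∣ t := by
    have h : p ^ (i * 2) ∣ (p ^ i * u) ^ 2 + t ^ 2 := (pow_dvd_pow p (by omega)).trans hst
    rw [dvd_add_right ⟨u ^ 2, by ring⟩, pow_mul] at h
    exact (Int.pow_dvd_pow_iff two_ne_zero).mp h
  obtain ⟨w, rfl⟩ := ht
  refine ⟨i, hik, u, w, rfl, rfl, hu, ?_⟩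
  have h : p ^ (2 * i) * p ∣ p ^ (2 * i) * (u ^ 2 + w ^ 2) := by
    rw [← pow_succ, show p ^ (2 * i) * (u ^ 2 + w ^ 2) = (p ^ i * u) ^ 2 + (p ^ i * w) ^ 2 by ring]
    exact (pow_dvd_pow p (by omega)).trans hst
  exact (mul_dvd_mul_iff_left (pow_ne_zero _ hp.ne_zero)).mp h

theorem exists_eq_pow_mul_of_pow_dvd_sq_add_sq {p : ℤ} (hp : Prime p) {k : ℕ} {s t : ℤ}
    (hst : p ^ (2 * k + 1) ∣ s ^ 2 + t ^ 2) (hst' : ¬ (p ^ (k + 1) ∣ s ∧ p ^ (k + 1) ∣ t)) :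
    ∃ i ≤ k, ∃ u w : ℤ, s = p ^ i * u ∧ t = p ^ i * w ∧ ¬ p ∣ u ∧ p ∣ u ^ 2 + w ^ 2 := by
  rcases not_and_or.mp hst' with hs | ht
  · exact exists_eq_pow_mul_of_pow_dvd_sq_add_sq_of_not_dvd hp hst hs
  · obtain ⟨i, hik, w, u, ht, hs, hw, hwu⟩ :=
      exists_eq_pow_mul_of_pow_dvd_sq_add_sq_of_not_dvd hp (add_comm (s ^ 2) _ ▸ hst) ht
    rw [add_comm] at hwu
    exact ⟨i, hik, u, w, hs, ht, hp.not_dvd_of_dvd_sq_add_sq hw (add_comm (w ^ 2) _ ▸ hwu), hwu⟩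

end Int

namespace ZMod

theorem intCast_mul_pow_eq_pow {p n : ℕ} {z : ℤ} (hz : (p : ℤ) ∣ z - 1) :
    (z : ZMod (p ^ (n + 1))) * (p ^ n : ℕ) = (p ^ n : ℕ) := by
  obtain ⟨q, hq⟩ := hz
  rw [show z = 1 + p * q by linarith, Int.cast_add, Int.cast_one, add_mul, one_mul, add_eq_left]
  push_cast
  rw [mul_comm, ← mul_assoc, ← pow_succ, ← Nat.cast_pow, ZMod.natCast_self, zero_mul]

theorem zsmul_pow_mul_prod_eq {p n i : ℕ} (hi : i ≤ n) {u w y : ℤ} (hy : (p : ℤ) ∣ y * u - 1) :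
    (y * p ^ (n - i)) •
        (((p ^ i * u : ℤ) : ZMod (p ^ (n + 1))), ((p ^ i * w : ℤ) : ZMod (p ^ (n + 1)))) =
      (((p ^ n : ℕ) : ZMod (p ^ (n + 1))), ((y * w : ℤ) : ZMod (p ^ (n + 1))) * (p ^ n : ℕ)) := by
  have hcoord : ∀ v : ℤ, (y * p ^ (n - i)) • ((p ^ i * v : ℤ) : ZMod (p ^ (n + 1))) =
      ((y * v : ℤ) : ZMod (p ^ (n + 1))) * (p ^ n : ℕ) := by
    intro v
    rw [zsmul_eq_mul]
    push_cast
    rw [← pow_sub_mul_pow _ hi]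
    ring
  rw [Prod.smul_mk, hcoord, hcoord, intCast_mul_pow_eq_pow hy]

end ZMod

theorem metabolizer_contains_special_element_general (p a : ℕ) (hp : p.Prime)
    (haodd : Odd a) (γ : ℤ) (hγ : Int.gcd γ p = 1)
    (M : AddSubgroup (ZMod (p ^ a) × ZMod (p ^ a))) (hcard : Nat.card M = p ^ a)
    (hvan : ∀ x ∈ M, ∀ y ∈ M,
      ((p : ℤ) ^ a) ∣ γ * ((x.1.val : ℤ) * (y.1.val : ℤ) + (x.2.val : ℤ) * (y.2.val : ℤ))) :
    ∃ α : ℤ, Int.gcd α p = 1 ∧ (p : ℤ) ∣ 1 + α ^ 2 ∧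
      ((((p ^ (a - 1) : ℕ) : ZMod (p ^ a)),
        (α : ZMod (p ^ a)) * ((p ^ (a - 1) : ℕ) : ZMod (p ^ a))) ∈ M) := by
  obtain ⟨k, rfl⟩ := haodd
  have : NeZero (p ^ (2 * k + 1)) := ⟨pow_ne_zero _ hp.ne_zero⟩
  have hpZ : Prime (p : ℤ) := Nat.prime_iff_prime_int.mp hp
  obtain ⟨m, hm, hmk⟩ : ∃ m ∈ M, p ^ k • m ≠ 0 := by
    by_contra! h
    have := M.card_le_sq_of_nsmul_eq_zero (pow_pos hp.pos k) h
    rw [hcard, ← pow_mul] at this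
    exact this.not_gt (Nat.pow_lt_pow_right hp.one_lt (by omega))
  have hself : (p : ℤ) ^ (2 * k + 1) ∣ (m.1.val : ℤ) ^ 2 + (m.2.val : ℤ) ^ 2 := by
    have hcop : IsCoprime ((p : ℤ) ^ (2 * k + 1)) γ :=
      (Int.isCoprime_iff_gcd_eq_one.mpr (by rwa [Int.gcd_comm])).pow_left
    simpa only [sq] using hcop.dvd_of_dvd_mul_left (hvan m hm m hm)
  have hval : ¬ ((p : ℤ) ^ (k + 1) ∣ m.1.val ∧ (p : ℤ) ^ (k + 1) ∣ m.2.val) := by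
    rintro ⟨h1, h2⟩
    have hde : p ^ (2 * k + 1) ∣ p ^ (k + 1) * p ^ k := by rw [← pow_add, two_mul, add_right_comm]
    exact hmk (Prod.ext (ZMod.nsmul_eq_zero_of_dvd_val hde (by exact_mod_cast h1))
      (ZMod.nsmul_eq_zero_of_dvd_val hde (by exact_mod_cast h2)))
  obtain ⟨i, hik, u, w, hs, ht, hu, huw⟩ :=
    Int.exists_eq_pow_mul_of_pow_dvd_sq_add_sq hpZ hself hval
  obtain ⟨y, hy, hyp⟩ := (hpZ.coprime_iff_not_dvd.mpr hu).exists_dvd_mul_sub_one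
  have hwp : IsCoprime w p :=
    (hpZ.coprime_iff_not_dvd.mpr (hpZ.not_dvd_of_dvd_sq_add_sq hu huw)).symm
  refine ⟨y * w, Int.isCoprime_iff_gcd_eq_one.mp (hyp.mul_left hwp),
    dvd_one_add_sq_of_dvd_mul_sub_one hy huw, ?_⟩
  have hm' : m = (((p ^ i * u : ℤ) : ZMod _), ((p ^ i * w : ℤ) : ZMod _)) := by
    rw [← hs, ← ht]
    simp
  convert M.zsmul_mem hm (y * p ^ (2 * k - i)) using 1
  rw [hm', ZMod.zsmul_pow_mul_prod_eq (by omega) hy, Nat.add_sub_cancel]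

/-- Let `p` be prime, `a ≥ 1` odd, `γ` coprime to `p`, and let `β` be the linking form on
`G = ℤ/pᵃ ⊕ ℤ/pᵃ` given by `β((x₁,x₂),(y₁,y₂)) = γ(x₁y₁+x₂y₂)/pᵃ (mod ℤ)`.  If `M ⊆ G` is a
metabolizer (a subgroup of order `pᵃ` on which `β` vanishes), then `M` contains an element of
the form `(p^(a-1), α·p^(a-1))` with `gcd(α,p) = 1` and `p ∣ 1 + α²`. -/
theorem metabolizer_contains_special_element (p a : ℕ) (hp : p.Prime) (ha : 1 ≤ a)
    (haodd : Odd a) (γ : ℤ) (hγ : Int.gcd γ p = 1)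
    (M : AddSubgroup (ZMod (p ^ a) × ZMod (p ^ a))) (hcard : Nat.card M = p ^ a)
    (hvan : ∀ x ∈ M, ∀ y ∈ M,
      ((p : ℤ) ^ a) ∣ γ * ((x.1.val : ℤ) * (y.1.val : ℤ) + (x.2.val : ℤ) * (y.2.val : ℤ))) :
    ∃ α : ℤ, Int.gcd α p = 1 ∧ (p : ℤ) ∣ 1 + α ^ 2 ∧
      ((((p ^ (a - 1) : ℕ) : ZMod (p ^ a)),
        (α : ZMod (p ^ a)) * ((p ^ (a - 1) : ℕ) : ZMod (p ^ a))) ∈ M) :=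
  metabolizer_contains_special_element_general p a hp haodd γ hγ M hcard hvan
end
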